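/- arXiv:2106.05219 — 3 statements merged into one kernel-verified Lean document; each statement's English description precedes it below -/
import Mathlib

section
/- Let m ≥ 1, 0 < ρ < 1, λ ≥ 0, and let J = (1 − ρ) I_m + ρ 1_m 1_mᵀ, b = 1_m (the vector of ones). Then the vector w* with all coordinates equal to (1 − λ)/(ρ(m − 1) + 1) if λ < 1, and w* = 0 if λ ≥ 1, minimizes d(w) = (1/2) wᵀ J w − wᵀ b + λ ∑_j |w_j| over ℝ^m. -/
open Matrix Finset

/-- Penalized score distance criterion d(w) = (1/2) wᵀ J w − wᵀ b + λ ∑ |w_j|. -/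
noncomputable def pdist {m : ℕ} (J : Matrix (Fin m) (Fin m) ℝ) (b : Fin m → ℝ) (lam : ℝ)
    (w : Fin m → ℝ) : ℝ :=
  (1 / 2) * (w ⬝ᵥ J.mulVec w) - w ⬝ᵥ b + lam * ∑ j, |w j|

theorem stmt11 {m : ℕ} (hm : 1 ≤ m) (ρ lam : ℝ) (hρ0 : 0 < ρ) (hρ1 : ρ < 1) (hlam : 0 ≤ lam) :
    let J : Matrix (Fin m) (Fin m) ℝ :=
      (1 - ρ) • (1 : Matrix (Fin m) (Fin m) ℝ) + ρ • Matrix.of (fun _ _ => (1 : ℝ))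
    let wstar : Fin m → ℝ :=
      fun _ => if lam < 1 then (1 - lam) / (ρ * ((m : ℝ) - 1) + 1) else 0
    ∀ w : Fin m → ℝ, pdist J (fun _ => 1) lam wstar ≤ pdist J (fun _ => 1) lam w := by
  intro J wstar w
  have hm1 : (1:ℝ) ≤ (m:ℝ) := by exact_mod_cast hm
  set c : ℝ := if lam < 1 then (1 - lam) / (ρ * ((m : ℝ) - 1) + 1) else 0 with hc
  have hden : 0 < ρ * ((m : ℝ) - 1) + 1 := by nlinarith
  have hc0 : 0 ≤ c := by
    rw [hc]; split
    · apply div_nonneg <;> linarith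
    · exact le_refl 0
  have key : ∀ v : Fin m → ℝ, pdist J (fun _ => 1) lam v
      = (1/2) * ((1-ρ) * ∑ j, (v j)^2 + ρ * (∑ j, v j)^2) - (∑ j, v j) + lam * ∑ j, |v j| := by
    intro v
    have hmv : J.mulVec v = fun i => (1-ρ) * v i + ρ * ∑ j, v j := by
      funext i
      simp [J, Matrix.mulVec, dotProduct, Matrix.add_apply, Matrix.one_apply,
        mul_add, add_mul, Finset.sum_add_distrib, mul_ite, ite_mul, Finset.mul_sum,
        Finset.sum_ite_eq, Finset.sum_ite_eq']
    unfold pdist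
    rw [hmv]
    simp only [dotProduct]
    rw [show ∑ i, v i * ((1-ρ) * v i + ρ * ∑ j, v j)
        = (1-ρ) * (∑ j, (v j)^2) + ρ * (∑ j, v j)^2 by
      rw [Finset.sum_congr rfl (fun i _ => by ring_nf :
        ∀ i ∈ univ, v i * ((1-ρ) * v i + ρ * ∑ j, v j)
          = (1-ρ) * (v i)^2 + (ρ * ∑ j, v j) * v i)]
      rw [Finset.sum_add_distrib, ← Finset.mul_sum, ← Finset.mul_sum]
      ring]
    simp only [mul_one]
  rw [key w, key wstar]
  simp only [show wstar = fun _ => c from rfl, Finset.sum_const, Finset.card_univ,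
    Fintype.card_fin, nsmul_eq_mul, abs_of_nonneg hc0]
  set S := ∑ j, w j with hS
  set T := ∑ j, (w j)^2 with hT
  set A := ∑ j, |w j| with hA
  have hAS : S ≤ A := Finset.sum_le_sum (fun j _ => le_abs_self _)
  have hA0 : 0 ≤ A := Finset.sum_nonneg (fun j _ => abs_nonneg _)
  have hT0 : 0 ≤ T := Finset.sum_nonneg (fun j _ => sq_nonneg _)
  have hV : 0 ≤ T - 2*c*S + m*c^2 := by
    have h := Finset.sum_nonneg (fun j (_ : j ∈ Finset.univ) => sq_nonneg (w j - c))
    have he : ∑ j, (w j - c)^2 = T - 2*c*S + m*c^2 := by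
      rw [hT, hS]
      rw [Finset.sum_congr rfl (fun j _ => by ring :
        ∀ j ∈ univ, (w j - c)^2 = (w j)^2 - (2*c) * w j + c^2)]
      rw [Finset.sum_add_distrib, Finset.sum_sub_distrib, ← Finset.mul_sum,
        Finset.sum_const, Finset.card_univ, Fintype.card_fin]
      ring
    linarith [he ▸ h]
  by_cases hl : lam < 1
  · have hcD : c * (ρ * ((m:ℝ) - 1) + 1) = 1 - lam := by
      rw [hc, if_pos hl]; field_simp
    have h1 : 0 ≤ (1-ρ) * (T - 2*c*S + (m:ℝ)*c^2) := mul_nonneg (by linarith) hV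
    have h2 : 0 ≤ ρ * (S - (m:ℝ)*c)^2 := mul_nonneg hρ0.le (sq_nonneg _)
    have h3 : 0 ≤ lam * (A - S) := mul_nonneg hlam (by linarith)
    have hz : (S - (m:ℝ)*c) * (c*(ρ*((m:ℝ)-1)+1) - (1-lam)) = 0 := by rw [hcD]; ring
    nlinarith [h1, h2, h3, hz]
  · have hc00 : c = 0 := by rw [hc, if_neg hl]
    rw [hc00]
    have h1 : 0 ≤ (1-ρ) * T := mul_nonneg (by linarith) hT0
    have h2 : 0 ≤ ρ * S^2 := mul_nonneg hρ0.le (sq_nonneg _)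
    have h3 : 0 ≤ (lam - 1) * A := mul_nonneg (by linarith) hA0
    nlinarith [h1, h2, h3, hAS]
end

section
/- Let J be an m×m symmetric positive semidefinite matrix, b ∈ ℝ^m, and λ ≥ 0. Suppose that for every v in the kernel of J one has |bᵀ v| ≤ λ ‖v‖₁. Then the function d(w) = (1/2) wᵀ J w − wᵀ b + λ ∑_j |w_j| is bounded below on ℝ^m. -/
/-!
Write `J = Bᵀ B`. Since `B` is antilipschitz on a complement of its kernel, every `w` lies within
distance `C ‖B w‖` of some `v ∈ ker B ⊆ ker J`. The hypothesis on `ker J` lets the `ℓ¹` penalty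
absorb `-bᵀ v`, leaving `d w ≥ ½ s² - D C s` with `s = ‖B w‖`, which is at least `-(D C)² / 2`.
-/

open Matrix Finset

open scoped MatrixOrder in
theorem Matrix.PosSemidef.exists_eq_transpose_mul_self {n : Type*} [Fintype n]
    {J : Matrix n n ℝ} (hJ : J.PosSemidef) : ∃ B : Matrix n n ℝ, J = Bᵀ * B := by
  classical
  exact CStarAlgebra.nonneg_iff_eq_star_mul_self.mp hJ.nonneg

theorem Matrix.dotProduct_transpose_mul_self_mulVec {m n : Type*} [Fintype m] [Fintype n]
    (B : Matrix m n ℝ) (w : n → ℝ) : w ⬝ᵥ (Bᵀ * B) *ᵥ w = B *ᵥ w ⬝ᵥ B *ᵥ w := by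
  rw [← mulVec_mulVec, dotProduct_mulVec, vecMul_transpose]

theorem LinearMap.exists_forall_exists_mem_ker_norm_sub_le {𝕜 E F : Type*}
    [NontriviallyNormedField 𝕜] [CompleteSpace 𝕜] [NormedAddCommGroup E] [NormedSpace 𝕜 E]
    [FiniteDimensional 𝕜 E] [NormedAddCommGroup F] [NormedSpace 𝕜 F] (f : E →ₗ[𝕜] F) :
    ∃ C : ℝ, ∀ x, ∃ y ∈ LinearMap.ker f, ‖x - y‖ ≤ C * ‖f x‖ := by
  obtain ⟨q, hq⟩ := (LinearMap.ker f).exists_isCompl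
  have hinj : LinearMap.ker (f.domRestrict q) = ⊥ :=
    LinearMap.ker_eq_bot.mpr (LinearMap.injective_domRestrict_iff.mpr hq.disjoint.symm)
  obtain ⟨c, -, hc⟩ := (f.domRestrict q).exists_antilipschitzWith hinj
  refine ⟨c, fun x ↦ ?_⟩
  obtain ⟨⟨y, hy⟩, z, rfl, -⟩ := Submodule.existsUnique_add_of_isCompl hq x
  refine ⟨y, hy, ?_⟩
  have hfz : f (y + z) = f z := by rw [map_add, LinearMap.mem_ker.mp hy, zero_add]
  simpa [hfz] using hc.le_mul_norm (map_zero _) z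

theorem sq_norm_le_dotProduct_self {ι : Type*} [Fintype ι] (x : ι → ℝ) : ‖x‖ ^ 2 ≤ x ⬝ᵥ x := by
  have hsq : ∀ i, x i ^ 2 ≤ x ⬝ᵥ x := fun i ↦ by
    simpa [dotProduct, sq] using
      Finset.single_le_sum (f := fun j ↦ x j * x j) (fun j _ ↦ mul_self_nonneg _) (mem_univ i)
  have hnonneg : 0 ≤ x ⬝ᵥ x := Finset.sum_nonneg fun j _ ↦ mul_self_nonneg (x j)
  exact (Real.le_sqrt (norm_nonneg x) hnonneg).mp <|
    (pi_norm_le_iff_of_nonneg (Real.sqrt_nonneg _)).mpr fun i ↦ Real.abs_le_sqrt (hsq i)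

theorem dotProduct_le_norm_mul_sum_abs {ι : Type*} [Fintype ι] (u b : ι → ℝ) :
    u ⬝ᵥ b ≤ ‖u‖ * ∑ j, |b j| := calc
  u ⬝ᵥ b ≤ ∑ j, |u j| * |b j| :=
    Finset.sum_le_sum fun _ _ ↦ (le_abs_self _).trans (abs_mul _ _).le
  _ ≤ ∑ j, ‖u‖ * |b j| :=
    Finset.sum_le_sum fun j _ ↦ mul_le_mul_of_nonneg_right (norm_le_pi_norm u j) (abs_nonneg _)
  _ = ‖u‖ * ∑ j, |b j| := (Finset.mul_sum _ _ _).symm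

theorem sum_abs_le_card_mul_norm {ι : Type*} [Fintype ι] (u : ι → ℝ) :
    ∑ j, |u j| ≤ Fintype.card ι * ‖u‖ := by
  simpa only [Real.norm_eq_abs, nsmul_eq_mul] using Pi.sum_norm_apply_le_norm u

theorem le_pdist_of_mulVec_eq_zero {m : ℕ} {J : Matrix (Fin m) (Fin m) ℝ} {b : Fin m → ℝ}
    {lam : ℝ} (hlam : 0 ≤ lam)
    (hker : ∀ v : Fin m → ℝ, J.mulVec v = 0 → |b ⬝ᵥ v| ≤ lam * ∑ j, |v j|)
    {v : Fin m → ℝ} (hv : J *ᵥ v = 0) (w : Fin m → ℝ) :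
    1 / 2 * (w ⬝ᵥ J *ᵥ w) - (∑ j, |b j| + lam * m) * ‖w - v‖ ≤ pdist J b lam w := by
  set u := w - v
  have hsplit : w ⬝ᵥ b = u ⬝ᵥ b + v ⬝ᵥ b := by rw [← add_dotProduct, sub_add_cancel]
  have hvb : v ⬝ᵥ b ≤ lam * ∑ j, |v j| := by
    rw [dotProduct_comm]
    exact (le_abs_self _).trans (hker v hv)
  have hv1 : ∑ j, |v j| ≤ ∑ j, |w j| + ∑ j, |u j| := by
    rw [← Finset.sum_add_distrib]
    refine Finset.sum_le_sum fun j _ ↦ ?_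
    simpa [u] using abs_sub (w j) (u j)
  have hu1 : ∑ j, |u j| ≤ m * ‖u‖ := by simpa using sum_abs_le_card_mul_norm u
  have hub := dotProduct_le_norm_mul_sum_abs u b
  rw [pdist, hsplit]
  nlinarith [mul_le_mul_of_nonneg_left hv1 hlam, mul_le_mul_of_nonneg_left hu1 hlam]

theorem stmt13 {m : ℕ} (J : Matrix (Fin m) (Fin m) ℝ) (b : Fin m → ℝ) (lam : ℝ)
    (hJ : J.PosSemidef) (hlam : 0 ≤ lam)
    (hker : ∀ v : Fin m → ℝ, J.mulVec v = 0 → |b ⬝ᵥ v| ≤ lam * ∑ j, |v j|) :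
    BddBelow (Set.range (pdist J b lam)) := by
  obtain ⟨B, rfl⟩ := hJ.exists_eq_transpose_mul_self
  obtain ⟨C, hC⟩ := B.mulVecLin.exists_forall_exists_mem_ker_norm_sub_le
  set D := ∑ j, |b j| + lam * m
  have hD : 0 ≤ D := by positivity
  refine ⟨-(D * C) ^ 2 / 2, ?_⟩
  rintro _ ⟨w, rfl⟩
  obtain ⟨v, hv, hwv⟩ := hC w
  have hJv : (Bᵀ * B) *ᵥ v = 0 := by
    rw [← mulVec_mulVec, show B *ᵥ v = 0 from hv, mulVec_zero]
  have hquad : ‖B *ᵥ w‖ ^ 2 ≤ w ⬝ᵥ (Bᵀ * B) *ᵥ w :=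
    (B.dotProduct_transpose_mul_self_mulVec w).symm ▸ sq_norm_le_dotProduct_self _
  have hlow := le_pdist_of_mulVec_eq_zero hlam hker hJv w
  have hpenalty : D * ‖w - v‖ ≤ D * (C * ‖B *ᵥ w‖) := mul_le_mul_of_nonneg_left hwv hD
  nlinarith [sq_nonneg (‖B *ᵥ w‖ - D * C)]
end

section
/- Let J be an m×m symmetric positive semidefinite matrix, b ∈ ℝ^m, λ ≥ 0, and d(w) = (1/2) wᵀ J w − wᵀ b + λ ∑_j |w_j|. If w₁ and w₂ are both global minimizers of d, then J w₁ = J w₂. -/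
/-!
Write `d w = ½ Q w + g w` with `Q w = wᵀ J w` and `g` convex. By the parallelogram law for `Q`
and convexity of `g`, the midpoint `v` of two minimizers satisfies
`d v ≤ (d w₁ + d w₂) / 2 - Q (w₁ - w₂) / 8`, so minimality forces `Q (w₁ - w₂) ≤ 0`.
For positive semidefinite `J` this means `Q (w₁ - w₂) = 0`, hence `J (w₁ - w₂) = 0`.
-/

open Matrix Finset

theorem Matrix.dotProduct_mulVec_add_add_sub {n R : Type*} [Fintype n] [CommRing R]
    (A : Matrix n n R) (x y : n → R) :
    (x + y) ⬝ᵥ A *ᵥ (x + y) + (x - y) ⬝ᵥ A *ᵥ (x - y) =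
      2 * (x ⬝ᵥ A *ᵥ x + y ⬝ᵥ A *ᵥ y) := by
  simp only [mulVec_add, mulVec_sub, dotProduct_add, dotProduct_sub, add_dotProduct,
    sub_dotProduct]
  ring

theorem convexOn_sum_abs (ι : Type*) [Fintype ι] :
    ConvexOn ℝ Set.univ fun w : ι → ℝ => ∑ j, |w j| := by
  have h : ∀ j, ConvexOn ℝ Set.univ fun w : ι → ℝ => |w j| := fun j => by
    simpa [Function.comp_def] using
      (convexOn_norm (convex_univ (𝕜 := ℝ) (E := ℝ))).comp_linearMap
        (LinearMap.proj (R := ℝ) (φ := fun _ : ι => ℝ) j)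
  simpa only [Finset.sum_fn] using
    Finset.sum_induction (fun j (w : ι → ℝ) => |w j|) (ConvexOn ℝ Set.univ)
      (fun _ _ => ConvexOn.add) (convexOn_const 0 convex_univ) fun j _ => h j

theorem convexOn_neg_dotProduct_add_smul_sum_abs {ι : Type*} [Fintype ι] (b : ι → ℝ)
    {lam : ℝ} (hlam : 0 ≤ lam) :
    ConvexOn ℝ Set.univ fun w : ι → ℝ => -(w ⬝ᵥ b) + lam * ∑ j, |w j| :=
  ((LinearMap.concaveOn ((dotProductBilin ℝ ℝ).flip b) convex_univ).neg).add
    ((convexOn_sum_abs ι).smul hlam)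

section Minimizers

variable {n : Type*} [Fintype n] {A : Matrix n n ℝ} {g : (n → ℝ) → ℝ} {w₁ w₂ : n → ℝ}

theorem Matrix.dotProduct_mulVec_sub_nonpos_of_forall_le (hg : ConvexOn ℝ Set.univ g)
    (h₁ : ∀ w, (1 / 2) * (w₁ ⬝ᵥ A *ᵥ w₁) + g w₁ ≤ (1 / 2) * (w ⬝ᵥ A *ᵥ w) + g w)
    (h₂ : ∀ w, (1 / 2) * (w₂ ⬝ᵥ A *ᵥ w₂) + g w₂ ≤ (1 / 2) * (w ⬝ᵥ A *ᵥ w) + g w) :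
    (w₁ - w₂) ⬝ᵥ A *ᵥ (w₁ - w₂) ≤ 0 := by
  set v := (1 / 2 : ℝ) • (w₁ + w₂)
  have hg_mid : g v ≤ (1 / 2) * g w₁ + (1 / 2) * g w₂ := by
    simpa [v, smul_add] using
      hg.2 (Set.mem_univ w₁) (Set.mem_univ w₂) (by norm_num : (0 : ℝ) ≤ 1 / 2)
        (by norm_num : (0 : ℝ) ≤ 1 / 2) (by norm_num)
  have hq_mid : v ⬝ᵥ A *ᵥ v = (1 / 4) * ((w₁ + w₂) ⬝ᵥ A *ᵥ (w₁ + w₂)) := by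
    simp only [v, mulVec_smul, dotProduct_smul, smul_dotProduct, smul_eq_mul]
    ring
  have hparallelogram := A.dotProduct_mulVec_add_add_sub w₁ w₂
  nlinarith [h₁ v, h₂ v]

theorem Matrix.PosSemidef.mulVec_eq_of_forall_le (hA : A.PosSemidef)
    (hg : ConvexOn ℝ Set.univ g)
    (h₁ : ∀ w, (1 / 2) * (w₁ ⬝ᵥ A *ᵥ w₁) + g w₁ ≤ (1 / 2) * (w ⬝ᵥ A *ᵥ w) + g w)
    (h₂ : ∀ w, (1 / 2) * (w₂ ⬝ᵥ A *ᵥ w₂) + g w₂ ≤ (1 / 2) * (w ⬝ᵥ A *ᵥ w) + g w) :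
    A *ᵥ w₁ = A *ᵥ w₂ := by
  have hzero : star (w₁ - w₂) ⬝ᵥ A *ᵥ (w₁ - w₂) = 0 :=
    le_antisymm (dotProduct_mulVec_sub_nonpos_of_forall_le hg h₁ h₂)
      (hA.dotProduct_mulVec_nonneg _)
  rw [← sub_eq_zero, ← mulVec_sub]
  exact (hA.dotProduct_mulVec_zero_iff _).mp hzero

end Minimizers

theorem stmt14 {m : ℕ} (J : Matrix (Fin m) (Fin m) ℝ) (b : Fin m → ℝ) (lam : ℝ)
    (hJ : J.PosSemidef) (hlam : 0 ≤ lam) (w₁ w₂ : Fin m → ℝ)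
    (h₁ : ∀ w, pdist J b lam w₁ ≤ pdist J b lam w)
    (h₂ : ∀ w, pdist J b lam w₂ ≤ pdist J b lam w) :
    J.mulVec w₁ = J.mulVec w₂ := by
  have hsplit : ∀ w, pdist J b lam w =
      (1 / 2) * (w ⬝ᵥ J *ᵥ w) + (-(w ⬝ᵥ b) + lam * ∑ j, |w j|) :=
    fun w => by rw [pdist]; ring
  simp only [hsplit] at h₁ h₂
  exact hJ.mulVec_eq_of_forall_le (convexOn_neg_dotProduct_add_smul_sum_abs b hlam) h₁ h₂
end
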